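/- For any ε > 0 and θ : X_A × X_B → ℝ, define Φ^ε = ε · log Σ_{x_B} exp(Q(x_B)/ε) where Q(x_B) = log Σ_{x_A} exp(θ(x_A, x_B)). Then Φ^ε = max over probability distributions τ on X_A × X_B of { E_τ[θ] + H_{A|B}(τ) + ε H_B(τ) }. -/

import Mathlib

open Real Finset

variable {XA XB : Type*} [Fintype XA] [Fintype XB]

noncomputable def Qfun (θ : XA × XB → ℝ) (b : XB) : ℝ :=
  Real.log (∑ a, Real.exp (θ (a, b)))

noncomputable def HAB (τ : XA × XB → ℝ) : ℝ :=
  (-∑ x, τ x * Real.log (τ x)) -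
    (-∑ b, (∑ a, τ (a, b)) * Real.log (∑ a, τ (a, b)))

/-- Entropy of the X_B-marginal of τ. -/
noncomputable def HBm (τ : XA × XB → ℝ) : ℝ :=
  -∑ b, (∑ a, τ (a, b)) * Real.log (∑ a, τ (a, b))

def IsPMF {X : Type*} [Fintype X] (τ : X → ℝ) : Prop :=
  (∀ x, 0 ≤ τ x) ∧ ∑ x, τ x = 1

/-!
Gibbs variational principle: for weights `p ≥ 0` of total mass `s`,
`∑ p f + H(p) ≤ s log ∑ exp f - s log s`, with equality at `p = s · softmax f`.
Applied to each conditional `τ(·, b)` with potential `θ(·, b)` it bounds the objective by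
`∑_b m_b Q_b + ε H(m)`, where `m` is the `x_B`-marginal; applied to `m` with potential `Q / ε`
it bounds this by `ε log ∑_b exp (Q_b / ε)`. Both bounds are equalities for the plan with
marginal `softmax (Q / ε)` and conditionals `softmax θ(·, b)`.
-/

lemma Real.sub_le_mul_log_sub_mul_log {p q : ℝ} (hp : 0 ≤ p) (hq : 0 < q) :
    p - q ≤ p * log p - p * log q := by
  rcases hp.eq_or_lt with rfl | hp
  · simpa using hq.le
  have h := self_sub_one_le_mul_log (div_pos hp hq).le
  rw [log_div hp.ne' hq.ne'] at h
  have h' := mul_le_mul_of_nonneg_left h hq.le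
  field_simp at h'
  linarith

section Gibbs

variable {X : Type*} [Fintype X]

noncomputable def gibbsValue (p f : X → ℝ) : ℝ :=
  ∑ x, p x * f x - ∑ x, p x * log (p x)

noncomputable def scaledSoftmax (s : ℝ) (f : X → ℝ) (x : X) : ℝ :=
  s * exp (f x) / ∑ y, exp (f y)

lemma scaledSoftmax_nonneg {s : ℝ} (hs : 0 ≤ s) (f : X → ℝ) (x : X) :
    0 ≤ scaledSoftmax s f x := by
  unfold scaledSoftmax
  positivity

lemma scaledSoftmax_pos [Nonempty X] {s : ℝ} (hs : 0 < s) (f : X → ℝ) (x : X) :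
    0 < scaledSoftmax s f x :=
  div_pos (by positivity) (sum_pos (fun _ _ => exp_pos _) univ_nonempty)

lemma sum_scaledSoftmax [Nonempty X] (s : ℝ) (f : X → ℝ) :
    ∑ x, scaledSoftmax s f x = s := by
  have hZ : 0 < ∑ y, exp (f y) := sum_pos (fun _ _ => exp_pos _) univ_nonempty
  simp only [scaledSoftmax, ← sum_div, ← mul_sum]
  field_simp

lemma log_scaledSoftmax {s : ℝ} (hs : 0 < s) (f : X → ℝ) (x : X) :
    log (scaledSoftmax s f x) = log s + f x - log (∑ y, exp (f y)) := by
  have hZ : 0 < ∑ y, exp (f y) := sum_pos (fun _ _ => exp_pos _) ⟨x, mem_univ x⟩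
  rw [scaledSoftmax, log_div (by positivity) hZ.ne', log_mul hs.ne' (exp_pos _).ne', log_exp]

lemma sum_mul_log_scaledSoftmax {s : ℝ} (hs : 0 < s) (p f : X → ℝ) :
    ∑ x, p x * log (scaledSoftmax s f x) =
      (∑ x, p x) * log s + ∑ x, p x * f x - (∑ x, p x) * log (∑ y, exp (f y)) := by
  simp only [log_scaledSoftmax hs, mul_add, mul_sub, sum_add_distrib, sum_sub_distrib, ← sum_mul]

theorem gibbsValue_le (p f : X → ℝ) (hp : ∀ x, 0 ≤ p x) :
    gibbsValue p f ≤ (∑ x, p x) * log (∑ x, exp (f x)) - (∑ x, p x) * log (∑ x, p x) := by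
  set s := ∑ x, p x
  rcases (sum_nonneg fun x _ => hp x : 0 ≤ s).eq_or_lt with hs | hs
  · have hp0 : ∀ x, p x = 0 := fun x =>
      (sum_eq_zero_iff_of_nonneg fun y _ => hp y).1 hs.symm x (mem_univ x)
    simp [gibbsValue, s, hp0]
  have : Nonempty X := by
    by_contra h
    simp [not_nonempty_iff.1 h] at hs
  -- Compare `p` pointwise with the maximiser `q` of the same mass.
  set q := scaledSoftmax s f
  have hpq : ∑ x, (p x - q x) ≤ ∑ x, (p x * log (p x) - p x * log (q x)) :=
    sum_le_sum fun x _ => sub_le_mul_log_sub_mul_log (hp x) (scaledSoftmax_pos hs f x)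
  rw [sum_sub_distrib, sum_sub_distrib, sum_scaledSoftmax, sum_mul_log_scaledSoftmax hs] at hpq
  unfold gibbsValue
  linarith

theorem gibbsValue_scaledSoftmax [Nonempty X] {s : ℝ} (hs : 0 < s) (f : X → ℝ) :
    gibbsValue (scaledSoftmax s f) f = s * log (∑ x, exp (f x)) - s * log s := by
  rw [gibbsValue, sum_mul_log_scaledSoftmax hs, sum_scaledSoftmax]
  ring

end Gibbs

noncomputable def smoothedObjective (θ : XA × XB → ℝ) (ε : ℝ) (τ : XA × XB → ℝ) : ℝ :=
  (∑ x, τ x * θ x) + HAB τ + ε * HBm τ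

lemma smoothedObjective_eq (θ : XA × XB → ℝ) (ε : ℝ) (τ : XA × XB → ℝ) :
    smoothedObjective θ ε τ =
      ∑ b, (gibbsValue (fun a => τ (a, b)) (fun a => θ (a, b)) +
          (∑ a, τ (a, b)) * log (∑ a, τ (a, b))) -
        ε * ∑ b, (∑ a, τ (a, b)) * log (∑ a, τ (a, b)) := by
  simp only [smoothedObjective, HAB, HBm, gibbsValue, sum_add_distrib, sum_sub_distrib,
    Fintype.sum_prod_type_right]
  ring

lemma mul_gibbsValue_div {X : Type*} [Fintype X] (m Q : X → ℝ) {ε : ℝ} (hε : ε ≠ 0) :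
    ε * gibbsValue m (fun b => Q b / ε) = ∑ b, m b * Q b - ε * ∑ b, m b * log (m b) := by
  simp only [gibbsValue, mul_sub, mul_sum]
  congr 1
  exact sum_congr rfl fun b _ => by field_simp

theorem smoothedObjective_le (θ : XA × XB → ℝ) {ε : ℝ} (hε : 0 < ε) {τ : XA × XB → ℝ}
    (hτ : IsPMF τ) :
    smoothedObjective θ ε τ ≤ ε * log (∑ b, exp (Qfun θ b / ε)) := by
  obtain ⟨hτ0, hτ1⟩ := hτ
  set m : XB → ℝ := fun b => ∑ a, τ (a, b)
  have hm0 : ∀ b, 0 ≤ m b := fun b => sum_nonneg fun a _ => hτ0 _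
  have hm1 : ∑ b, m b = 1 := by rw [← hτ1, Fintype.sum_prod_type_right]
  have hcond : ∀ b, gibbsValue (fun a => τ (a, b)) (fun a => θ (a, b)) + m b * log (m b) ≤
      m b * Qfun θ b := fun b => by
    have := gibbsValue_le (fun a => τ (a, b)) (fun a => θ (a, b)) fun a => hτ0 _
    rw [Qfun]
    linarith
  have hmarg := gibbsValue_le m (fun b => Qfun θ b / ε) hm0
  rw [hm1, log_one, mul_zero, sub_zero, one_mul] at hmarg
  calc smoothedObjective θ ε τ
      ≤ ∑ b, m b * Qfun θ b - ε * ∑ b, m b * log (m b) := by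
        rw [smoothedObjective_eq]
        exact sub_le_sub_right (sum_le_sum fun b _ => hcond b) _
    _ = ε * gibbsValue m (fun b => Qfun θ b / ε) := (mul_gibbsValue_div _ _ hε.ne').symm
    _ ≤ ε * log (∑ b, exp (Qfun θ b / ε)) := mul_le_mul_of_nonneg_left hmarg hε.le

noncomputable def optimalPlan (θ : XA × XB → ℝ) (ε : ℝ) (x : XA × XB) : ℝ :=
  scaledSoftmax (scaledSoftmax 1 (fun b => Qfun θ b / ε) x.2) (fun a => θ (a, x.2)) x.1

lemma sum_optimalPlan_fst [Nonempty XA] (θ : XA × XB → ℝ) (ε : ℝ) (b : XB) :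
    ∑ a, optimalPlan θ ε (a, b) = scaledSoftmax 1 (fun b => Qfun θ b / ε) b :=
  sum_scaledSoftmax (scaledSoftmax 1 (fun b => Qfun θ b / ε) b) fun a => θ (a, b)

lemma isPMF_optimalPlan [Nonempty XA] [Nonempty XB] (θ : XA × XB → ℝ) (ε : ℝ) :
    IsPMF (optimalPlan θ ε) := by
  refine ⟨fun x => scaledSoftmax_nonneg (scaledSoftmax_nonneg zero_le_one _ _) _ _, ?_⟩
  simp only [Fintype.sum_prod_type_right, sum_optimalPlan_fst, sum_scaledSoftmax]

theorem smoothedObjective_optimalPlan [Nonempty XA] [Nonempty XB] (θ : XA × XB → ℝ) {ε : ℝ}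
    (hε : ε ≠ 0) :
    smoothedObjective θ ε (optimalPlan θ ε) = ε * log (∑ b, exp (Qfun θ b / ε)) := by
  set μ := scaledSoftmax 1 (fun b => Qfun θ b / ε) with hμ_def
  have hμ : ∀ b, 0 < μ b := scaledSoftmax_pos one_pos _
  have hcond : ∀ b, gibbsValue (fun a => optimalPlan θ ε (a, b)) (fun a => θ (a, b)) +
      μ b * log (μ b) = μ b * Qfun θ b := fun b => by
    change gibbsValue (scaledSoftmax (μ b) fun a => θ (a, b)) _ + _ = _
    rw [gibbsValue_scaledSoftmax (hμ b), Qfun]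
    ring
  rw [smoothedObjective_eq]
  simp only [sum_optimalPlan_fst, ← hμ_def, hcond]
  rw [← mul_gibbsValue_div _ _ hε, gibbsValue_scaledSoftmax one_pos, log_one]
  ring

/-- Smoothed dual representation:
Φ^ε = ε log Σ_{x_B} exp(Q(x_B)/ε) = max_τ { E_τ[θ] + H_{A|B}(τ) + ε H_B(τ) }. -/
theorem smoothed_marginal_MAP_duality [Nonempty XA] [Nonempty XB]
    (θ : XA × XB → ℝ) (ε : ℝ) (hε : 0 < ε) :
    IsGreatest
      {v | ∃ τ : XA × XB → ℝ, IsPMF τ ∧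
        v = (∑ x, τ x * θ x) + HAB τ + ε * HBm τ}
      (ε * Real.log (∑ b, Real.exp (Qfun θ b / ε))) := by
  refine ⟨⟨optimalPlan θ ε, isPMF_optimalPlan θ ε, ?_⟩, ?_⟩
  · exact (smoothedObjective_optimalPlan θ hε.ne').symm
  · rintro v ⟨τ, hτ, rfl⟩
    exact smoothedObjective_le θ hε hτ
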